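/- arXiv:2506.22782 — 2 statements merged into one kernel-verified Lean document; each statement's English description precedes it below -/
import Mathlib

section
/- Let 0 ≤ β̂ < 1, δ̂ > 0, C > 0, C₀ ≥ 0 and 0 ≤ α̂ < δ̂/2. Suppose y is a nonnegative locally integrable function on [0,∞) satisfying y(t) ≤ C₀ e^{-2α̂ t} + C ∫₀ᵗ (t-s)^{-β̂} e^{-δ̂(t-s)} y(s) ds for all t ≥ 0, and assume C < (δ̂ - 2α̂)^{1-β̂} / Γ(1-β̂). Then for all t ≥ 0: y(t) ≤ C₀ e^{-2α̂ t} · (1 + C Γ(1-β̂) / ((δ̂ - 2α̂)^{1-β̂} - C Γ(1-β̂))). -/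
/-!
For `z t = e^{2α̂t} y t` the hypothesis becomes `z ≤ C₀ + k ∗ z` with the kernel
`k x = C x^{-β̂} e^{-(δ̂-2α̂)x}`, whose total mass `κ = C Γ(1-β̂) / (δ̂-2α̂)^{1-β̂}` is `< 1`
exactly by the smallness assumption. For `M = C₀ / (1 - κ)` one has `C₀ + κ M = M`, so the
excess `u = (z - M)⁺` satisfies `u ≤ k ∗ u`. Integrating over `(0, T]` and exchanging the
integrals gives `‖u‖_{L¹(0,T)} ≤ κ ‖u‖_{L¹(0,T)}`, and `‖u‖_{L¹(0,T)} < ∞` by local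
integrability; hence `u = 0` a.e., so `k ∗ u ≡ 0` and finally `u ≡ 0`, i.e. `z ≤ M`.
The argument runs with lower Lebesgue integrals, so no integrability of the convolutions
is ever needed.
-/

open MeasureTheory Real Set

open scoped ENNReal

theorem integral_Ioi_rpow_neg_mul_exp_neg_mul {β r : ℝ} (hβ : β < 1) (hr : 0 < r) :
    ∫ x in Ioi 0, x ^ (-β) * exp (-r * x) = Gamma (1 - β) / r ^ (1 - β) := by
  have h := integral_rpow_mul_exp_neg_mul_Ioi (sub_pos.2 hβ) hr
  rw [sub_sub_cancel_left, div_rpow zero_le_one hr.le, one_rpow] at h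
  simp only [neg_mul, h]
  ring

theorem integrableOn_Ioi_rpow_neg_mul_exp_neg_mul {β r : ℝ} (hβ : β < 1) (hr : 0 < r) :
    IntegrableOn (fun x => x ^ (-β) * exp (-r * x)) (Ioi 0) := by
  simpa only [rpow_one] using
    integrableOn_rpow_mul_exp_neg_mul_rpow (neg_lt_neg hβ) one_pos hr

theorem setLIntegral_Ioc_comp_sub_le (g : ℝ → ℝ≥0∞) (t : ℝ) :
    ∫⁻ s in Ioc 0 t, g (t - s) ≤ ∫⁻ x in Ioi 0, g x :=
  calc ∫⁻ s in Ioc 0 t, g (t - s) = ∫⁻ s in Ioc 0 t, (Ici 0).indicator g (t - s) :=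
        setLIntegral_congr_fun measurableSet_Ioc fun s hs =>
          (indicator_of_mem (sub_nonneg.2 hs.2) g).symm
    _ ≤ ∫⁻ s, (Ici 0).indicator g (t - s) := setLIntegral_le_lintegral _ _
    _ = ∫⁻ x in Ioi 0, g x := by
        rw [lintegral_sub_left_eq_self, lintegral_indicator measurableSet_Ici,
          setLIntegral_congr Ioi_ae_eq_Ici]

theorem setLIntegral_Ioc_conv_le {k u : ℝ → ℝ≥0∞} (hk : Measurable k) {T : ℝ}
    (hu : AEMeasurable u (volume.restrict (Ioc 0 T))) :
    ∫⁻ t in Ioc 0 T, ∫⁻ s in Ioc 0 t, k (t - s) * u s ≤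
      (∫⁻ x in Ioi 0, k x) * ∫⁻ s in Ioc 0 T, u s := by
  set k' := (Ici (0 : ℝ)).indicator k
  have hk' : Measurable k' := hk.indicator measurableSet_Ici
  have hinner : ∀ t ∈ Ioc 0 T,
      ∫⁻ s in Ioc 0 t, k (t - s) * u s ≤ ∫⁻ s in Ioc 0 T, k' (t - s) * u s := fun t ht =>
    calc ∫⁻ s in Ioc 0 t, k (t - s) * u s = ∫⁻ s in Ioc 0 t, k' (t - s) * u s :=
          setLIntegral_congr_fun measurableSet_Ioc fun s hs => by
            rw [show k' (t - s) = k (t - s) from indicator_of_mem (sub_nonneg.2 hs.2) k]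
      _ ≤ _ := lintegral_mono_set (Ioc_subset_Ioc_right ht.2)
  have hshift : ∀ s, ∫⁻ t in Ioc 0 T, k' (t - s) ≤ ∫⁻ x in Ioi 0, k x := fun s =>
    calc ∫⁻ t in Ioc 0 T, k' (t - s) ≤ ∫⁻ t, k' (t - s) := setLIntegral_le_lintegral _ _
      _ = ∫⁻ x in Ioi 0, k x := by
        rw [lintegral_sub_right_eq_self, lintegral_indicator measurableSet_Ici,
          setLIntegral_congr Ioi_ae_eq_Ici]
  calc _ ≤ ∫⁻ t in Ioc 0 T, ∫⁻ s in Ioc 0 T, k' (t - s) * u s :=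
        setLIntegral_mono' measurableSet_Ioc hinner
    _ = ∫⁻ s in Ioc 0 T, ∫⁻ t in Ioc 0 T, k' (t - s) * u s :=
        lintegral_lintegral_swap ((hk'.comp measurable_sub).aemeasurable.mul hu.comp_snd)
    _ = ∫⁻ s in Ioc 0 T, (∫⁻ t in Ioc 0 T, k' (t - s)) * u s :=
        lintegral_congr fun s => lintegral_mul_const _ (hk'.comp (measurable_sub_const s))
    _ ≤ ∫⁻ s in Ioc 0 T, (∫⁻ x in Ioi 0, k x) * u s :=
        lintegral_mono fun s => by gcongr ?_ * _; exact hshift s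
    _ = _ := lintegral_const_mul'' _ hu

theorem eq_zero_of_le_conv {k u : ℝ → ℝ≥0∞} (hk : Measurable k) (hk1 : ∫⁻ x in Ioi 0, k x < 1)
    (hu : AEMeasurable u (volume.restrict (Ioi 0))) (hu_fin : ∀ T, ∫⁻ s in Ioc 0 T, u s ≠ ∞)
    (hle : ∀ t, 0 ≤ t → u t ≤ ∫⁻ s in Ioc 0 t, k (t - s) * u s) {t : ℝ} (ht : 0 ≤ t) :
    u t = 0 := by
  have hut : AEMeasurable u (volume.restrict (Ioc 0 t)) := hu.mono_set Ioc_subset_Ioi_self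
  have hI : ∫⁻ s in Ioc 0 t, u s = 0 := by
    by_contra h
    refine lt_irrefl (∫⁻ s in Ioc 0 t, u s) ?_
    calc ∫⁻ s in Ioc 0 t, u s ≤ ∫⁻ τ in Ioc 0 t, ∫⁻ s in Ioc 0 τ, k (τ - s) * u s :=
          setLIntegral_mono' measurableSet_Ioc fun τ hτ => hle τ hτ.1.le
      _ ≤ (∫⁻ x in Ioi 0, k x) * ∫⁻ s in Ioc 0 t, u s := setLIntegral_Ioc_conv_le hk hut
      _ < 1 * ∫⁻ s in Ioc 0 t, u s := ENNReal.mul_lt_mul_left h (hu_fin t) hk1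
      _ = ∫⁻ s in Ioc 0 t, u s := one_mul _
  have hu0 : u =ᵐ[volume.restrict (Ioc 0 t)] 0 := (lintegral_eq_zero_iff' hut).1 hI
  refine le_antisymm ((hle t ht).trans_eq ?_) zero_le
  have hconv0 : (fun s => k (t - s) * u s) =ᵐ[volume.restrict (Ioc 0 t)] 0 :=
    hu0.mono fun s hs => by simp [hs]
  simp [lintegral_congr_ae hconv0]

theorem ofReal_integral_le_lintegral_ofReal {α : Type*} [MeasurableSpace α] {μ : Measure α}
    (f : α → ℝ) : ENNReal.ofReal (∫ a, f a ∂μ) ≤ ∫⁻ a, ENNReal.ofReal (f a) ∂μ := by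
  by_cases hf : Integrable f μ
  · rw [integral_eq_lintegral_pos_part_sub_lintegral_neg_part hf]
    exact (ENNReal.ofReal_le_ofReal (sub_le_self _ ENNReal.toReal_nonneg)).trans
      ENNReal.ofReal_toReal_le
  · simp [integral_undef hf]

theorem ofReal_sub_le_conv {k z : ℝ → ℝ} {a κ M t : ℝ} (hk : Measurable k)
    (hk0 : ∀ x, 0 ≤ x → 0 ≤ k x)
    (hkκ : ∫⁻ s in Ioc 0 t, ENNReal.ofReal (k (t - s)) ≤ ENNReal.ofReal κ)
    (ha : 0 ≤ a) (hκ : 0 ≤ κ) (hM0 : 0 ≤ M) (hM : a + κ * M ≤ M)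
    (hle : z t ≤ a + ∫ s in Ioc 0 t, k (t - s) * z s) :
    ENNReal.ofReal (z t - M) ≤
      ∫⁻ s in Ioc 0 t, ENNReal.ofReal (k (t - s)) * ENNReal.ofReal (z s - M) := by
  set X := ∫⁻ s in Ioc 0 t, ENNReal.ofReal (k (t - s)) * ENNReal.ofReal (z s - M)
  have hsplit : ∀ s ∈ Ioc 0 t, ENNReal.ofReal (k (t - s) * z s) ≤
      ENNReal.ofReal (k (t - s)) * ENNReal.ofReal M +
        ENNReal.ofReal (k (t - s)) * ENNReal.ofReal (z s - M) := fun s hs => by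
    rw [← mul_add, ENNReal.ofReal_mul (hk0 _ (sub_nonneg.2 hs.2))]
    gcongr
    calc ENNReal.ofReal (z s) = ENNReal.ofReal (M + (z s - M)) := by rw [add_sub_cancel]
      _ ≤ _ := ENNReal.ofReal_add_le
  have hkmeas : Measurable fun s => ENNReal.ofReal (k (t - s)) :=
    (hk.comp (measurable_const_sub t)).ennreal_ofReal
  rw [ENNReal.ofReal_sub _ hM0, tsub_le_iff_left]
  calc ENNReal.ofReal (z t)
      ≤ ENNReal.ofReal a + ENNReal.ofReal (∫ s in Ioc 0 t, k (t - s) * z s) :=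
        (ENNReal.ofReal_le_ofReal hle).trans ENNReal.ofReal_add_le
    _ ≤ ENNReal.ofReal a + ∫⁻ s in Ioc 0 t, ENNReal.ofReal (k (t - s) * z s) := by
        gcongr
        exact ofReal_integral_le_lintegral_ofReal _
    _ ≤ ENNReal.ofReal a +
          ((∫⁻ s in Ioc 0 t, ENNReal.ofReal (k (t - s))) * ENNReal.ofReal M + X) := by
        rw [← lintegral_mul_const _ hkmeas, ← lintegral_add_left (hkmeas.mul_const _)]
        gcongr _ + ?_
        exact setLIntegral_mono' measurableSet_Ioc hsplit
    _ ≤ ENNReal.ofReal (a + κ * M) + X := by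
        rw [ENNReal.ofReal_add ha (mul_nonneg hκ hM0), ENNReal.ofReal_mul hκ, add_assoc]
        gcongr
    _ ≤ ENNReal.ofReal M + X := by gcongr

theorem le_div_one_sub_of_le_add_conv {k z : ℝ → ℝ} {a : ℝ} (hk : Measurable k)
    (hk0 : ∀ x, 0 ≤ x → 0 ≤ k x) (hk_int : IntegrableOn k (Ioi 0))
    (hk1 : ∫ x in Ioi 0, k x < 1) (ha : 0 ≤ a) (hz : LocallyIntegrableOn z (Ici 0))
    (hle : ∀ t, 0 ≤ t → z t ≤ a + ∫ s in Ioc 0 t, k (t - s) * z s) {t : ℝ} (ht : 0 ≤ t) :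
    z t ≤ a / (1 - ∫ x in Ioi 0, k x) := by
  set κ := ∫ x in Ioi 0, k x
  have hκ0 : 0 ≤ κ := setIntegral_nonneg measurableSet_Ioi fun x hx => hk0 x (le_of_lt hx)
  have hκ : ∫⁻ x in Ioi 0, ENNReal.ofReal (k x) = ENNReal.ofReal κ :=
    (ofReal_integral_eq_lintegral_ofReal hk_int
      (ae_restrict_of_forall_mem measurableSet_Ioi fun x hx => hk0 x (le_of_lt hx))).symm
  set M := a / (1 - κ)
  have hM0 : 0 ≤ M := div_nonneg ha (sub_nonneg.2 hk1.le)
  have hM : a + κ * M = M := by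
    simp only [M]
    field_simp [(sub_pos.2 hk1).ne']
    ring
  suffices ENNReal.ofReal (z t - M) = 0 by simpa [sub_nonpos] using this
  refine eq_zero_of_le_conv (k := fun x => ENNReal.ofReal (k x))
    (u := fun s => ENNReal.ofReal (z s - M)) hk.ennreal_ofReal
    (hκ ▸ ENNReal.ofReal_lt_one.2 hk1) ?_ (fun T => ?_) (fun τ hτ => ?_) ht
  · exact ((hz.aestronglyMeasurable.aemeasurable.sub_const M).ennreal_ofReal).mono_set
      Ioi_subset_Ici_self
  · have hzT : IntegrableOn z (Ioc 0 T) :=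
      (hz.integrableOn_compact_subset Icc_subset_Ici_self isCompact_Icc).mono_set
        Ioc_subset_Icc_self
    exact (hzT.sub (integrableOn_const measure_Ioc_lt_top.ne)).setLIntegral_lt_top.ne
  · exact ofReal_sub_le_conv hk hk0 ((setLIntegral_Ioc_comp_sub_le _ τ).trans_eq hκ) ha hκ0
      hM0 hM.le (hle τ hτ)

theorem exp_mul_le_const_add_conv {g y : ℝ → ℝ} {C₀ C c δ t : ℝ}
    (h : y t ≤ C₀ * exp (-c * t) + C * ∫ s in Ioc 0 t, g (t - s) * exp (-δ * (t - s)) * y s) :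
    exp (c * t) * y t ≤
      C₀ + ∫ s in Ioc 0 t, C * (g (t - s) * exp (-(δ - c) * (t - s))) * (exp (c * s) * y s) := by
  have hexp : ∀ s, exp (c * t) * (C * (g (t - s) * exp (-δ * (t - s)) * y s)) =
      C * (g (t - s) * exp (-(δ - c) * (t - s))) * (exp (c * s) * y s) := fun s => by
    have h : exp (c * t) * exp (-δ * (t - s)) = exp (-(δ - c) * (t - s)) * exp (c * s) := by
      rw [← exp_add, ← exp_add]
      ring_nf
    linear_combination (C * g (t - s) * y s) * h
  calc exp (c * t) * y t ≤ exp (c * t) * (C₀ * exp (-c * t) + C * ∫ s in Ioc 0 t,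
        g (t - s) * exp (-δ * (t - s)) * y s) := by gcongr
    _ = C₀ + ∫ s in Ioc 0 t,
          C * (g (t - s) * exp (-(δ - c) * (t - s))) * (exp (c * s) * y s) := by
      rw [mul_add, mul_left_comm, ← exp_add, neg_mul, add_neg_cancel, exp_zero, mul_one,
        ← integral_const_mul, ← integral_const_mul]
      simp only [hexp]

theorem gronwall_tempered_kernel_exp_decay_general
    (β δ C C₀ α : ℝ) (hβ1 : β < 1) (hC : 0 < C)
    (hC₀ : 0 ≤ C₀) (hα : α < δ / 2)
    (y : ℝ → ℝ)
    (hy_loc : LocallyIntegrableOn y (Ici (0:ℝ)))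
    (hineq : ∀ t, 0 ≤ t →
      y t ≤ C₀ * Real.exp (-2 * α * t) + C * ∫ s in Ioc (0:ℝ) t,
        (t - s) ^ (-β) * Real.exp (-δ * (t - s)) * y s)
    (hsmall : C < (δ - 2 * α) ^ (1 - β) / Real.Gamma (1 - β)) :
    ∀ t, 0 ≤ t →
      y t ≤ C₀ * Real.exp (-2 * α * t) *
        (1 + C * Real.Gamma (1 - β) /
          ((δ - 2 * α) ^ (1 - β) - C * Real.Gamma (1 - β))) := by
  intro t ht
  have hr : 0 < δ - 2 * α := by linarith
  have hΓ : 0 < Gamma (1 - β) := Gamma_pos_of_pos (sub_pos.2 hβ1)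
  set k : ℝ → ℝ := fun x => C * (x ^ (-β) * exp (-(δ - 2 * α) * x))
  have hk_int : ∫ x in Ioi 0, k x = C * Gamma (1 - β) / (δ - 2 * α) ^ (1 - β) := by
    rw [integral_const_mul, integral_Ioi_rpow_neg_mul_exp_neg_mul hβ1 hr, mul_div_assoc]
  have hk1 : ∫ x in Ioi 0, k x < 1 := by
    rwa [hk_int, div_lt_one (by positivity), ← lt_div_iff₀ hΓ]
  have hz := le_div_one_sub_of_le_add_conv (k := k) (z := fun t => exp (2 * α * t) * y t)
    (by fun_prop) (fun x hx => by positivity)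
    ((integrableOn_Ioi_rpow_neg_mul_exp_neg_mul hβ1 hr).const_mul C) hk1 hC₀
    (hy_loc.continuousOn_mul (by fun_prop) isClosed_Ici.isLocallyClosed)
    (fun τ hτ => exp_mul_le_const_add_conv (g := (· ^ (-β))) (c := 2 * α)
      (by simpa only [neg_mul] using hineq τ hτ)) ht
  have hκ : 0 < (δ - 2 * α) ^ (1 - β) - C * Gamma (1 - β) := by
    rw [lt_div_iff₀ hΓ] at hsmall
    linarith
  rw [hk_int, ← le_div_iff₀' (exp_pos _), div_eq_mul_inv, ← exp_neg] at hz
  refine hz.trans_eq ?_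
  field_simp
  ring_nf

/-- Exponential-decay form of the convolution Grönwall inequality: if
`y(t) ≤ C₀ e^{-2α̂t} + C (Q_{β̂,δ̂} * y)(t)` for all `t ≥ 0` and
`C < (δ̂-2α̂)^{1-β̂}/Γ(1-β̂)`, then
`y(t) ≤ C₀ e^{-2α̂t} (1 + CΓ(1-β̂)/((δ̂-2α̂)^{1-β̂} - CΓ(1-β̂)))`. -/
theorem gronwall_tempered_kernel_exp_decay
    (β δ C C₀ α : ℝ) (hβ0 : 0 ≤ β) (hβ1 : β < 1) (hδ : 0 < δ) (hC : 0 < C)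
    (hC₀ : 0 ≤ C₀) (hα0 : 0 ≤ α) (hα : α < δ / 2)
    (y : ℝ → ℝ)
    (hy_nonneg : ∀ t, 0 ≤ t → 0 ≤ y t)
    (hy_loc : LocallyIntegrableOn y (Ici (0:ℝ)))
    (hineq : ∀ t, 0 ≤ t →
      y t ≤ C₀ * Real.exp (-2 * α * t) + C * ∫ s in Ioc (0:ℝ) t,
        (t - s) ^ (-β) * Real.exp (-δ * (t - s)) * y s)
    (hsmall : C < (δ - 2 * α) ^ (1 - β) / Real.Gamma (1 - β)) :
    ∀ t, 0 ≤ t →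
      y t ≤ C₀ * Real.exp (-2 * α * t) *
        (1 + C * Real.Gamma (1 - β) /
          ((δ - 2 * α) ^ (1 - β) - C * Real.Gamma (1 - β))) :=
  gronwall_tempered_kernel_exp_decay_general β δ C C₀ α hβ1 hC hC₀ hα y hy_loc hineq hsmall
end

section
/- Let 0 ≤ β < 1, δ > 0 and 0 ≤ α < δ/2, and let T > 0. For all nonnegative measurable functions f, g on [0,T] with ∫₀^T e^{2αs} f(s)² ds < ∞ and ∫₀^T e^{2αs} g(s)² ds < ∞, the following bilinear estimate holds: ( ∫₀^T e^{2αs} (Q_{β,δ} * f)(s) · g(s) ds )² ≤ (Γ(1-β)² / [δ(δ-2α)]^{1-β}) · ( ∫₀^T e^{2αs} f(s)² ds ) · ( ∫₀^T e^{2αs} g(s)² ds ). -/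
open MeasureTheory Real Set
open scoped ENNReal

/-!
The weight is absorbed into the kernel, `e^{αs} Q_{β,δ}(s - r) = Q_{β,δ-α}(s - r) e^{αr}`, so with
`F = |e^{α·} f|`, `G = |e^{α·} g|` and the causal kernel `k = 1_{t ≥ 0} Q_{β,δ-α}` the left side is
at most `(∫∫ G(s) k(s - r) F(r))²`. The Schur test (Young's inequality `L¹ * L² ⊆ L²`) bounds this
by `‖k‖₁² ‖F‖₂² ‖G‖₂²`, where `‖k‖₁ = Γ(1-β) / (δ-α)^{1-β}`, and `(δ-α)² ≥ δ(δ-2α)`.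
-/

theorem lintegral_mul_sq_le_sq_mul_sq {X : Type*} [MeasurableSpace X] (μ : Measure X)
    {F G : X → ℝ≥0∞} (hF : AEMeasurable F μ) (hG : AEMeasurable G μ) :
    (∫⁻ x, F x * G x ∂μ) ^ 2 ≤ (∫⁻ x, F x ^ 2 ∂μ) * ∫⁻ x, G x ^ 2 ∂μ := by
  have sqrt_sq (a : ℝ≥0∞) : (a ^ (1 / 2 : ℝ)) ^ 2 = a := by
    rw [← ENNReal.rpow_natCast, ← ENNReal.rpow_mul]; norm_num
  have holder := ENNReal.lintegral_mul_le_Lp_mul_Lq μ Real.HolderConjugate.two_two hF hG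
  simp only [ENNReal.rpow_two, Pi.mul_apply] at holder
  calc (∫⁻ x, F x * G x ∂μ) ^ 2
      ≤ ((∫⁻ x, F x ^ 2 ∂μ) ^ (1 / 2 : ℝ) * (∫⁻ x, G x ^ 2 ∂μ) ^ (1 / 2 : ℝ)) ^ 2 := by
        gcongr
    _ = (∫⁻ x, F x ^ 2 ∂μ) * ∫⁻ x, G x ^ 2 ∂μ := by rw [mul_pow, sqrt_sq, sqrt_sq]

theorem lintegral_mul_lintegral_kernel_mul_sq_le {X Y : Type*} [MeasurableSpace X]
    [MeasurableSpace Y] {μ : Measure X} {ν : Measure Y} [SFinite μ] [SFinite ν] {κ : X → Y → ℝ≥0∞}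
    (hκ : Measurable (Function.uncurry κ)) {F : Y → ℝ≥0∞} {G : X → ℝ≥0∞}
    (hF : Measurable F) (hG : Measurable G) {A B : ℝ≥0∞}
    (hrow : ∀ x, ∫⁻ y, κ x y ∂ν ≤ A) (hcol : ∀ y, ∫⁻ x, κ x y ∂μ ≤ B) :
    (∫⁻ x, G x * ∫⁻ y, κ x y * F y ∂ν ∂μ) ^ 2
      ≤ A * B * ((∫⁻ y, F y ^ 2 ∂ν) * ∫⁻ x, G x ^ 2 ∂μ) := by
  -- Cauchy–Schwarz for the measure with density `κ` on `μ × ν`.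
  set ρ := (μ.prod ν).withDensity (Function.uncurry κ)
  have hρ {H : X × Y → ℝ≥0∞} (hH : Measurable H) :
      ∫⁻ p, H p ∂ρ = ∫⁻ x, ∫⁻ y, κ x y * H (x, y) ∂ν ∂μ := by
    rw [lintegral_withDensity_eq_lintegral_mul _ hκ hH, lintegral_prod _ (hκ.mul hH).aemeasurable]
    rfl
  have hGρ : ∫⁻ p, G p.1 ^ 2 ∂ρ ≤ A * ∫⁻ x, G x ^ 2 ∂μ := by
    rw [hρ (by fun_prop), ← lintegral_const_mul _ (by fun_prop)]
    refine lintegral_mono fun x => ?_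
    dsimp only
    rw [lintegral_mul_const _ hκ.of_uncurry_left]
    gcongr
    exact hrow x
  have hFρ : ∫⁻ p, F p.2 ^ 2 ∂ρ ≤ B * ∫⁻ y, F y ^ 2 ∂ν := by
    rw [lintegral_withDensity_eq_lintegral_mul _ hκ (by fun_prop),
      lintegral_prod_symm _ (by fun_prop), ← lintegral_const_mul _ (by fun_prop)]
    refine lintegral_mono fun y => ?_
    simp only [Pi.mul_apply, Function.uncurry_apply_pair]
    rw [lintegral_mul_const _ hκ.of_uncurry_right]
    gcongr
    exact hcol y
  have hprod : ∫⁻ x, G x * ∫⁻ y, κ x y * F y ∂ν ∂μ = ∫⁻ p, G p.1 * F p.2 ∂ρ := by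
    rw [hρ (by fun_prop)]
    refine lintegral_congr fun x => ?_
    rw [← lintegral_const_mul _ (by fun_prop)]
    congr 1 with y
    ring
  calc (∫⁻ x, G x * ∫⁻ y, κ x y * F y ∂ν ∂μ) ^ 2
      ≤ (∫⁻ p, G p.1 ^ 2 ∂ρ) * ∫⁻ p, F p.2 ^ 2 ∂ρ := by
        rw [hprod]
        exact lintegral_mul_sq_le_sq_mul_sq ρ (by fun_prop) (by fun_prop)
    _ ≤ (A * ∫⁻ x, G x ^ 2 ∂μ) * (B * ∫⁻ y, F y ^ 2 ∂ν) := by gcongr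
    _ = A * B * ((∫⁻ y, F y ^ 2 ∂ν) * ∫⁻ x, G x ^ 2 ∂μ) := by ring

theorem lintegral_mul_lintegral_sub_mul_sq_le {E : Type*} [MeasurableSpace E] [AddGroup E]
    [MeasurableAdd₂ E] [MeasurableNeg E] {μ : Measure E} [SFinite μ] [μ.IsAddLeftInvariant]
    [μ.IsAddRightInvariant] [μ.IsNegInvariant] (S : Set E) {k F G : E → ℝ≥0∞}
    (hk : Measurable k) (hF : Measurable F) (hG : Measurable G) :
    (∫⁻ s in S, G s * ∫⁻ r in S, k (s - r) * F r ∂μ ∂μ) ^ 2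
      ≤ (∫⁻ t, k t ∂μ) ^ 2 * ((∫⁻ r in S, F r ^ 2 ∂μ) * ∫⁻ s in S, G s ^ 2 ∂μ) := by
  rw [sq (∫⁻ t, k t ∂μ)]
  refine lintegral_mul_lintegral_kernel_mul_sq_le (by fun_prop) hF hG (fun s => ?_) (fun r => ?_)
  · exact (setLIntegral_le_lintegral _ _).trans (lintegral_sub_left_eq_self k s).le
  · exact (setLIntegral_le_lintegral _ _).trans (lintegral_sub_right_eq_self k r).le

noncomputable def temperedKernel (β δ t : ℝ) : ℝ := t ^ (-β) * exp (-δ * t)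

noncomputable def temperedConv (β δ : ℝ) (φ : ℝ → ℝ) (t : ℝ) : ℝ :=
  ∫ s in Ioc 0 t, temperedKernel β δ (t - s) * φ s

theorem measurable_temperedKernel (β δ : ℝ) : Measurable (temperedKernel β δ) := by
  unfold temperedKernel
  fun_prop

theorem exp_mul_temperedKernel (α β δ t : ℝ) :
    exp (α * t) * temperedKernel β δ t = temperedKernel β (δ - α) t := by
  rw [temperedKernel, temperedKernel, mul_left_comm, ← exp_add]
  ring_nf

theorem lintegral_enorm_temperedKernel {β c : ℝ} (hβ : β < 1) (hc : 0 < c) :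
    ∫⁻ t in Ici 0, ‖temperedKernel β c t‖ₑ
      = ENNReal.ofReal ((1 / c) ^ (1 - β) * Gamma (1 - β)) := by
  have hint : IntegrableOn (temperedKernel β c) (Ioi 0) := by
    refine (integrableOn_rpow_mul_exp_neg_mul_rpow (p := 1) (s := -β) (b := c) (by linarith)
      one_pos hc).congr_fun (fun t _ => ?_) measurableSet_Ioi
    simp [temperedKernel]
  rw [setLIntegral_congr Ioi_ae_eq_Ici.symm, ← ofReal_integral_norm_eq_lintegral_enorm hint,
    ← integral_rpow_mul_exp_neg_mul_Ioi (by linarith) hc]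
  congr 1
  refine setIntegral_congr_fun measurableSet_Ioi fun t ht => ?_
  rw [temperedKernel, Real.norm_of_nonneg (mul_nonneg (rpow_nonneg (le_of_lt ht) _) (exp_pos _).le)]
  ring_nf

theorem enorm_exp_mul_temperedConv_le {α β δ s T : ℝ} (f : ℝ → ℝ) (hsT : s ≤ T) :
    ‖exp (α * s) * temperedConv β δ f s‖ₑ
      ≤ ∫⁻ r in Ioc 0 T, (Ici 0).indicator (fun t => ‖temperedKernel β (δ - α) t‖ₑ) (s - r)
          * ‖exp (α * r) * f r‖ₑ := by
  rw [temperedConv, ← integral_const_mul]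
  refine (enorm_integral_le_lintegral_enorm _).trans ?_
  calc ∫⁻ r in Ioc 0 s, ‖exp (α * s) * (temperedKernel β δ (s - r) * f r)‖ₑ
      = ∫⁻ r in Ioc 0 s, (Ici 0).indicator (fun t => ‖temperedKernel β (δ - α) t‖ₑ) (s - r)
          * ‖exp (α * r) * f r‖ₑ := by
        refine setLIntegral_congr_fun measurableSet_Ioc fun r hr => ?_
        rw [indicator_of_mem (mem_Ici.2 (sub_nonneg.2 hr.2)), ← exp_mul_temperedKernel α,
          ← enorm_mul]
        congr 1
        rw [show α * s = α * (s - r) + α * r by ring, exp_add]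
        ring
    _ ≤ _ := lintegral_mono_set (Ioc_subset_Ioc_right hsT)

theorem enorm_integral_exp_mul_temperedConv_mul_le {α β δ T : ℝ} (f g : ℝ → ℝ) :
    ‖∫ s in Ioc 0 T, exp (2 * α * s) * temperedConv β δ f s * g s‖ₑ
      ≤ ∫⁻ s in Ioc 0 T, ‖exp (α * s) * g s‖ₑ
          * ∫⁻ r in Ioc 0 T, (Ici 0).indicator (fun t => ‖temperedKernel β (δ - α) t‖ₑ) (s - r)
            * ‖exp (α * r) * f r‖ₑ := by
  refine (enorm_integral_le_lintegral_enorm _).trans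
    (setLIntegral_mono' measurableSet_Ioc fun s hs => ?_)
  rw [show exp (2 * α * s) * temperedConv β δ f s * g s
      = exp (α * s) * g s * (exp (α * s) * temperedConv β δ f s) by
    rw [show 2 * α * s = α * s + α * s by ring, exp_add]; ring, enorm_mul]
  gcongr
  exact enorm_exp_mul_temperedConv_le f hs.2

theorem lintegral_enorm_exp_mul_sq {α : ℝ} {S : Set ℝ} {f : ℝ → ℝ}
    (hf : IntegrableOn (fun s => exp (2 * α * s) * f s ^ 2) S) :
    ∫⁻ s in S, ‖exp (α * s) * f s‖ₑ ^ 2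
      = ENNReal.ofReal (∫ s in S, exp (2 * α * s) * f s ^ 2) := by
  have hsq (s : ℝ) : ‖exp (α * s) * f s‖ₑ ^ 2 = ‖exp (2 * α * s) * f s ^ 2‖ₑ := by
    rw [← enorm_pow, mul_pow, ← exp_nat_mul]
    ring_nf
  simp_rw [hsq, ← ofReal_integral_norm_eq_lintegral_enorm hf, Real.norm_of_nonneg
    (mul_nonneg (exp_pos _).le (sq_nonneg _))]

theorem sq_le_of_enorm_sq_le_ofReal {x y : ℝ} (hy : 0 ≤ y) (h : ‖x‖ₑ ^ 2 ≤ ENNReal.ofReal y) :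
    x ^ 2 ≤ y := by
  rwa [Real.enorm_eq_ofReal_abs, ← ENNReal.ofReal_pow (abs_nonneg x), sq_abs,
    ENNReal.ofReal_le_ofReal_iff hy] at h

theorem sq_rpow_mul_Gamma_le {α β δ : ℝ} (hβ : β < 1) (hδ : 0 < δ) (hα : α < δ / 2) :
    ((1 / (δ - α)) ^ (1 - β) * Gamma (1 - β)) ^ 2
      ≤ Gamma (1 - β) ^ 2 / (δ * (δ - 2 * α)) ^ (1 - β) := by
  have hpos : 0 < δ * (δ - 2 * α) := mul_pos hδ (by linarith)
  have hc : 0 < δ - α := by linarith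
  have hsq : ((1 / (δ - α)) ^ (1 - β)) ^ 2 = 1 / ((δ - α) ^ 2) ^ (1 - β) := by
    rw [rpow_pow_comm (by positivity), one_div_pow, div_rpow zero_le_one (sq_nonneg _), one_rpow]
  rw [mul_pow, hsq, mul_comm, ← div_eq_mul_one_div]
  gcongr
  nlinarith [sq_nonneg α]

theorem weighted_bilinear_convolution_estimate_general
    (β δ α T : ℝ) (hβ1 : β < 1) (hδ : 0 < δ)
    (hα : α < δ / 2)
    (f g : ℝ → ℝ) (hf : Measurable f) (hg : Measurable g)
    (hf_int : IntegrableOn (fun s => Real.exp (2 * α * s) * f s ^ 2) (Ioc (0:ℝ) T))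
    (hg_int : IntegrableOn (fun s => Real.exp (2 * α * s) * g s ^ 2) (Ioc (0:ℝ) T)) :
    (∫ s in Ioc (0:ℝ) T, Real.exp (2 * α * s) *
        (∫ r in Ioc (0:ℝ) s, (s - r) ^ (-β) * Real.exp (-δ * (s - r)) * f r) * g s) ^ 2
      ≤ (Real.Gamma (1 - β)) ^ 2 / (δ * (δ - 2 * α)) ^ (1 - β) *
        ((∫ s in Ioc (0:ℝ) T, Real.exp (2 * α * s) * f s ^ 2) *
          (∫ s in Ioc (0:ℝ) T, Real.exp (2 * α * s) * g s ^ 2)) := by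
  show (∫ s in Ioc 0 T, exp (2 * α * s) * temperedConv β δ f s * g s) ^ 2 ≤ _
  have hc : 0 < δ - α := by linarith
  have hA : 0 ≤ ∫ s in Ioc 0 T, exp (2 * α * s) * f s ^ 2 :=
    setIntegral_nonneg measurableSet_Ioc fun s _ => by positivity
  have hB : 0 ≤ ∫ s in Ioc 0 T, exp (2 * α * s) * g s ^ 2 :=
    setIntegral_nonneg measurableSet_Ioc fun s _ => by positivity
  have young := lintegral_mul_lintegral_sub_mul_sq_le (μ := volume) (Ioc 0 T)
    ((measurable_temperedKernel β (δ - α)).enorm.indicator (measurableSet_Ici (a := 0)))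
    (by fun_prop : Measurable fun r => ‖exp (α * r) * f r‖ₑ)
    (by fun_prop : Measurable fun s => ‖exp (α * s) * g s‖ₑ)
  rw [lintegral_indicator measurableSet_Ici, lintegral_enorm_temperedKernel hβ1 hc,
    lintegral_enorm_exp_mul_sq hf_int, lintegral_enorm_exp_mul_sq hg_int,
    ← ENNReal.ofReal_pow (by positivity), ← ENNReal.ofReal_mul hA,
    ← ENNReal.ofReal_mul (by positivity)] at young
  refine (sq_le_of_enorm_sq_le_ofReal (by positivity)
    ((pow_le_pow_left' (enorm_integral_exp_mul_temperedConv_mul_le f g) 2).trans young)).trans ?_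
  gcongr
  exact sq_rpow_mul_Gamma_le hβ1 hδ hα

/-- Bilinear exponentially weighted estimate for the tempered power-law kernel:
`(∫₀^T e^{2αs} (Q_{β,δ}*f)(s) g(s) ds)² ≤ (Γ(1-β)²/[δ(δ-2α)]^{1-β})
(∫₀^T e^{2αs} f² ds)(∫₀^T e^{2αs} g² ds)`. -/
theorem weighted_bilinear_convolution_estimate
    (β δ α T : ℝ) (hβ0 : 0 ≤ β) (hβ1 : β < 1) (hδ : 0 < δ)
    (hα0 : 0 ≤ α) (hα : α < δ / 2) (hT : 0 < T)
    (f g : ℝ → ℝ) (hf : Measurable f) (hg : Measurable g)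
    (hf_nonneg : ∀ s ∈ Icc (0:ℝ) T, 0 ≤ f s)
    (hg_nonneg : ∀ s ∈ Icc (0:ℝ) T, 0 ≤ g s)
    (hf_int : IntegrableOn (fun s => Real.exp (2 * α * s) * f s ^ 2) (Ioc (0:ℝ) T))
    (hg_int : IntegrableOn (fun s => Real.exp (2 * α * s) * g s ^ 2) (Ioc (0:ℝ) T)) :
    (∫ s in Ioc (0:ℝ) T, Real.exp (2 * α * s) *
        (∫ r in Ioc (0:ℝ) s, (s - r) ^ (-β) * Real.exp (-δ * (s - r)) * f r) * g s) ^ 2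
      ≤ (Real.Gamma (1 - β)) ^ 2 / (δ * (δ - 2 * α)) ^ (1 - β) *
        ((∫ s in Ioc (0:ℝ) T, Real.exp (2 * α * s) * f s ^ 2) *
          (∫ s in Ioc (0:ℝ) T, Real.exp (2 * α * s) * g s ^ 2)) :=
  weighted_bilinear_convolution_estimate_general β δ α T hβ1 hδ hα f g hf hg hf_int hg_int
end
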